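/- arXiv:2109.09474 — 2 statements merged into one kernel-verified Lean document; each statement's English description precedes it below -/
import Mathlib

section
/- Let σ > 0, a ≥ 0, b ≥ 0 and let n be a natural number. The function f_n(t) = (a + bt) · Σ_{k=0}^{∞} e^{-(k+n)²t²/(2σ²)} is convex on the interval (0, ∞). -/
open Real Set Filter

/-- Summability of `m^j * exp(-m^2 w)` over ℕ. -/
lemma summable_nat_gauss (j : ℕ) {w : ℝ} (hw : 0 < w) :
    Summable (fun m : ℕ => (m : ℝ) ^ j * Real.exp (-(m : ℝ) ^ 2 * w)) := by
  have hr : ‖Real.exp (-w)‖ < 1 := by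
    rw [Real.norm_eq_abs, abs_of_pos (Real.exp_pos _)]
    exact Real.exp_lt_one_iff.mpr (by linarith)
  have h1 : Summable (fun m : ℕ => (m : ℝ) ^ j * (Real.exp (-w)) ^ m) :=
    summable_pow_mul_geometric_of_norm_lt_one j hr
  refine h1.of_nonneg_of_le (fun m => by positivity) (fun m => ?_)
  have hme : (Real.exp (-w)) ^ m = Real.exp (-(m : ℝ) * w) := by
    rw [← Real.exp_nat_mul]; ring_nf
  rw [hme]
  have h2 : (m : ℝ) ≤ (m : ℝ) ^ 2 := by
    rcases Nat.eq_zero_or_pos m with h | h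
    · simp [h]
    · have : (1 : ℝ) ≤ (m : ℝ) := by exact_mod_cast h
      nlinarith
  have h3 : Real.exp (-(m : ℝ) ^ 2 * w) ≤ Real.exp (-(m : ℝ) * w) := by
    apply Real.exp_le_exp.mpr; nlinarith
  exact mul_le_mul_of_nonneg_left h3 (by positivity)

lemma summable_nat_gauss_add (n j : ℕ) {w : ℝ} (hw : 0 < w) :
    Summable (fun k : ℕ => ((k : ℝ) + n) ^ j * Real.exp (-((k : ℝ) + n) ^ 2 * w)) := by
  have h := (summable_nat_add_iff (f := fun m : ℕ => (m : ℝ) ^ j * Real.exp (-(m : ℝ) ^ 2 * w)) n).2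
    (summable_nat_gauss j hw)
  refine h.congr fun k => ?_
  push_cast
  ring_nf

lemma summable_int_gauss (j : ℕ) {w : ℝ} (hw : 0 < w) :
    Summable (fun m : ℤ => (m : ℝ) ^ (2 * j) * Real.exp (-(m : ℝ) ^ 2 * w)) := by
  apply Summable.of_nat_of_neg_add_one
  · refine (summable_nat_gauss (2 * j) hw).congr fun m => ?_
    push_cast; ring_nf
  · have h := (summable_nat_add_iff (f := fun m : ℕ => (m : ℝ) ^ (2 * j) * Real.exp (-(m : ℝ) ^ 2 * w)) 1).2
      (summable_nat_gauss (2 * j) hw)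
    refine h.congr fun m => ?_
    push_cast
    rw [show (-((m : ℝ) + 1)) ^ (2 * j) = ((m : ℝ) + 1) ^ (2 * j) by
      rw [Even.neg_pow (even_two_mul j)], show (-((m : ℝ) + 1)) ^ 2 = ((m : ℝ) + 1) ^ 2 by ring]

lemma aux_xexp {x : ℝ} (hx : 0 ≤ x) : x * Real.exp (-x / 2) ≤ 2 := by
  rcases eq_or_lt_of_le hx with rfl | h
  · simp
  · have h1 : x / 2 ≤ Real.exp (x / 2) := by linarith [Real.add_one_le_exp (x / 2)]
    rw [show -x / 2 = -(x / 2) by ring, Real.exp_neg, ← div_eq_mul_inv,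
      div_le_iff₀ (Real.exp_pos _)]
    nlinarith

lemma aux_x2exp {x : ℝ} (hx : 0 ≤ x) : x ^ 2 * Real.exp (-x / 2) ≤ 16 := by
  rcases eq_or_lt_of_le hx with rfl | h
  · simp
  · have h1 : x / 4 ≤ Real.exp (x / 4) := by linarith [Real.add_one_le_exp (x / 4)]
    have h2 : x ^ 2 / 16 ≤ Real.exp (x / 2) := by
      have : Real.exp (x / 2) = Real.exp (x / 4) * Real.exp (x / 4) := by
        rw [← Real.exp_add]; ring_nf
      nlinarith
    rw [show -x / 2 = -(x / 2) by ring, Real.exp_neg, ← div_eq_mul_inv,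
      div_le_iff₀ (Real.exp_pos _)]
    nlinarith

lemma T1_bound {q z ε : ℝ} (hq : 0 ≤ q) (hε : 0 < ε) (hz : ε ≤ z) :
    2 * q * z * Real.exp (-(q * z ^ 2)) ≤ 4 / ε * Real.exp (-(q * (ε ^ 2 / 2))) := by
  have hz0 : 0 < z := lt_of_lt_of_le hε hz
  have hx : 0 ≤ q * z ^ 2 := by positivity
  have haux := aux_xexp hx
  have hEpos : (0:ℝ) < Real.exp (-(q * z ^ 2) / 2) := Real.exp_pos _
  have hsplit : Real.exp (-(q * z ^ 2)) =
      Real.exp (-(q * z ^ 2) / 2) * Real.exp (-(q * z ^ 2) / 2) := by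
    rw [← Real.exp_add]; ring_nf
  have hmono : Real.exp (-(q * z ^ 2) / 2) ≤ Real.exp (-(q * (ε ^ 2 / 2))) := by
    apply Real.exp_le_exp.mpr
    have h5 : q * ε ^ 2 ≤ q * z ^ 2 := mul_le_mul_of_nonneg_left (by nlinarith) hq
    linarith
  calc 2 * q * z * Real.exp (-(q * z ^ 2))
      = (2 / z) * (q * z ^ 2 * Real.exp (-(q * z ^ 2) / 2)) * Real.exp (-(q * z ^ 2) / 2) := by
        rw [hsplit]; field_simp
    _ ≤ (2 / z) * 2 * Real.exp (-(q * (ε ^ 2 / 2))) := by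
        apply mul_le_mul (mul_le_mul_of_nonneg_left haux (by positivity)) hmono hEpos.le
          (by positivity)
    _ ≤ (2 / ε) * 2 * Real.exp (-(q * (ε ^ 2 / 2))) := by
        have h4 : 2 / z ≤ 2 / ε := by gcongr
        nlinarith [Real.exp_pos (-(q * (ε ^ 2 / 2)))]
    _ = 4 / ε * Real.exp (-(q * (ε ^ 2 / 2))) := by ring

lemma T2_bound {q z ε : ℝ} (hq : 0 ≤ q) (hε : 0 < ε) (hz : ε ≤ z) :
    (4 * q ^ 2 * z ^ 2 + 2 * q) * Real.exp (-(q * z ^ 2)) ≤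
      68 / ε ^ 2 * Real.exp (-(q * (ε ^ 2 / 2))) := by
  have hz0 : 0 < z := lt_of_lt_of_le hε hz
  have hx : 0 ≤ q * z ^ 2 := by positivity
  have haux := aux_xexp hx
  have haux2 := aux_x2exp hx
  have hEpos : (0:ℝ) < Real.exp (-(q * z ^ 2) / 2) := Real.exp_pos _
  have hsplit : Real.exp (-(q * z ^ 2)) =
      Real.exp (-(q * z ^ 2) / 2) * Real.exp (-(q * z ^ 2) / 2) := by
    rw [← Real.exp_add]; ring_nf
  have hmono : Real.exp (-(q * z ^ 2) / 2) ≤ Real.exp (-(q * (ε ^ 2 / 2))) := by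
    apply Real.exp_le_exp.mpr
    have h5 : q * ε ^ 2 ≤ q * z ^ 2 := mul_le_mul_of_nonneg_left (by nlinarith) hq
    linarith
  calc (4 * q ^ 2 * z ^ 2 + 2 * q) * Real.exp (-(q * z ^ 2))
      = ((4 / z ^ 2) * ((q * z ^ 2) ^ 2 * Real.exp (-(q * z ^ 2) / 2))
          + (2 / z ^ 2) * (q * z ^ 2 * Real.exp (-(q * z ^ 2) / 2)))
          * Real.exp (-(q * z ^ 2) / 2) := by
        rw [hsplit]; field_simp
    _ ≤ ((4 / z ^ 2) * 16 + (2 / z ^ 2) * 2) * Real.exp (-(q * (ε ^ 2 / 2))) := by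
        apply mul_le_mul ?_ hmono hEpos.le ?_
        · apply add_le_add
          · exact mul_le_mul_of_nonneg_left haux2 (by positivity)
          · exact mul_le_mul_of_nonneg_left haux (by positivity)
        · positivity
    _ = 68 / z ^ 2 * Real.exp (-(q * (ε ^ 2 / 2))) := by ring
    _ ≤ 68 / ε ^ 2 * Real.exp (-(q * (ε ^ 2 / 2))) := by
        have h4 : 68 / z ^ 2 ≤ 68 / ε ^ 2 := by gcongr
        nlinarith [Real.exp_pos (-(q * (ε ^ 2 / 2)))]

noncomputable def thA (y : ℝ) : ℝ := ∑' m : ℤ, Real.exp (-(m : ℝ) ^ 2 * y)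
noncomputable def thB (y : ℝ) : ℝ := ∑' m : ℤ, -(m : ℝ) ^ 2 * Real.exp (-(m : ℝ) ^ 2 * y)
noncomputable def thC (y : ℝ) : ℝ := ∑' m : ℤ, (m : ℝ) ^ 4 * Real.exp (-(m : ℝ) ^ 2 * y)
noncomputable def thK (y : ℝ) : ℝ :=
  ∑' m : ℤ, (m : ℝ) ^ 2 * (2 * (m : ℝ) ^ 2 * y - 3) * Real.exp (-(m : ℝ) ^ 2 * y)

lemma summable_int_gauss0 {w : ℝ} (hw : 0 < w) :
    Summable (fun m : ℤ => Real.exp (-(m : ℝ) ^ 2 * w)) := by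
  refine (summable_int_gauss 0 hw).congr fun m => ?_
  simp

lemma summable_int_gauss2 {w : ℝ} (hw : 0 < w) :
    Summable (fun m : ℤ => (m : ℝ) ^ 2 * Real.exp (-(m : ℝ) ^ 2 * w)) := by
  refine (summable_int_gauss 1 hw).congr fun m => ?_
  norm_num

lemma summable_int_gauss4 {w : ℝ} (hw : 0 < w) :
    Summable (fun m : ℤ => (m : ℝ) ^ 4 * Real.exp (-(m : ℝ) ^ 2 * w)) := by
  refine (summable_int_gauss 2 hw).congr fun m => ?_
  norm_num

lemma hasDerivAt_thA {y : ℝ} (hy : 0 < y) : HasDerivAt thA (thB y) y := by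
  have hε : 0 < y / 2 := by linarith
  refine hasDerivAt_tsum_of_isPreconnected
    (u := fun m : ℤ => (m : ℝ) ^ 2 * Real.exp (-(m : ℝ) ^ 2 * (y / 2)))
    (summable_int_gauss2 hε) isOpen_Ioi isPreconnected_Ioi
    (g := fun m z => Real.exp (-(m : ℝ) ^ 2 * z))
    (g' := fun m z => -(m : ℝ) ^ 2 * Real.exp (-(m : ℝ) ^ 2 * z))
    (fun m z _ => ?_) (fun m z hz => ?_)
    (show y ∈ Ioi (y / 2) by simpa using half_lt_self hy)
    (summable_int_gauss0 hy) (show y ∈ Ioi (y / 2) by simpa using half_lt_self hy)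
  · have h := ((hasDerivAt_id z).const_mul (-(m : ℝ) ^ 2)).exp
    exact h.congr_deriv (by simp only [id_eq]; ring)
  · rw [norm_mul, norm_neg, Real.norm_eq_abs, Real.norm_eq_abs, abs_of_nonneg (by positivity),
      abs_of_nonneg (Real.exp_pos _).le]
    have : Real.exp (-(m : ℝ) ^ 2 * z) ≤ Real.exp (-(m : ℝ) ^ 2 * (y / 2)) := by
      apply Real.exp_le_exp.mpr
      have hz' : y / 2 ≤ z := le_of_lt hz
      nlinarith [sq_nonneg (m : ℝ)]
    exact mul_le_mul_of_nonneg_left this (by positivity)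

lemma hasDerivAt_thB {y : ℝ} (hy : 0 < y) : HasDerivAt thB (thC y) y := by
  have hε : 0 < y / 2 := by linarith
  refine hasDerivAt_tsum_of_isPreconnected
    (u := fun m : ℤ => (m : ℝ) ^ 4 * Real.exp (-(m : ℝ) ^ 2 * (y / 2)))
    (summable_int_gauss4 hε) isOpen_Ioi isPreconnected_Ioi
    (g := fun m z => -(m : ℝ) ^ 2 * Real.exp (-(m : ℝ) ^ 2 * z))
    (g' := fun m z => (m : ℝ) ^ 4 * Real.exp (-(m : ℝ) ^ 2 * z))
    (fun m z _ => ?_) (fun m z hz => ?_)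
    (show y ∈ Ioi (y / 2) by simpa using half_lt_self hy)
    ((summable_int_gauss2 hy).neg.congr (fun m => by ring))
    (show y ∈ Ioi (y / 2) by simpa using half_lt_self hy)
  · have h := (((hasDerivAt_id z).const_mul (-(m : ℝ) ^ 2)).exp).const_mul (-(m : ℝ) ^ 2)
    exact h.congr_deriv (by simp only [id_eq]; ring)
  · rw [norm_mul, Real.norm_eq_abs, Real.norm_eq_abs, abs_of_nonneg (by positivity),
      abs_of_nonneg (Real.exp_pos _).le]
    have : Real.exp (-(m : ℝ) ^ 2 * z) ≤ Real.exp (-(m : ℝ) ^ 2 * (y / 2)) := by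
      apply Real.exp_le_exp.mpr
      have hz' : y / 2 ≤ z := le_of_lt hz
      nlinarith [sq_nonneg (m : ℝ)]
    exact mul_le_mul_of_nonneg_left this (by positivity)

lemma thK_eq {y : ℝ} (hy : 0 < y) : thK y = 2 * y * thC y + 3 * thB y := by
  rw [thK, thC, thB, ← tsum_mul_left, ← tsum_mul_left,
    ← Summable.tsum_add ((summable_int_gauss4 hy).mul_left _)
      (((summable_int_gauss2 hy).neg.congr (fun m => by ring)).mul_left _)]
  exact tsum_congr fun m => by ring

/-- Jacobi theta transformation. -/
lemma thA_transform {s : ℝ} (hs : 0 < s) :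
    thA (s ^ 2) = Real.sqrt π * s⁻¹ * thA (π ^ 2 / s ^ 2) := by
  have hπ := Real.pi_pos
  have h := Real.tsum_exp_neg_mul_int_sq (a := s ^ 2 / π) (by positivity)
  have h1 : (∑' m : ℤ, Real.exp (-π * (s ^ 2 / π) * (m : ℝ) ^ 2)) = thA (s ^ 2) := by
    refine tsum_congr fun m => ?_
    congr 1
    field_simp
  have h2 : (∑' m : ℤ, Real.exp (-π / (s ^ 2 / π) * (m : ℝ) ^ 2)) = thA (π ^ 2 / s ^ 2) := by
    refine tsum_congr fun m => ?_
    congr 1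
    field_simp
  rw [h1, h2] at h
  rw [h]
  congr 1
  rw [← Real.sqrt_eq_rpow]
  rw [show s ^ 2 / π = (s / Real.sqrt π) ^ 2 by
    rw [div_pow, Real.sq_sqrt hπ.le]]
  rw [Real.sqrt_sq (by positivity)]
  field_simp

lemma inner_deriv {s : ℝ} (hs : 0 < s) :
    HasDerivAt (fun z : ℝ => π ^ 2 / z ^ 2) (-2 * π ^ 2 * (s⁻¹) ^ 3) s := by
  have h := ((hasDerivAt_pow 2 s).inv (pow_ne_zero 2 hs.ne')).const_mul (π ^ 2)
  have h2 : (fun z : ℝ => π ^ 2 / z ^ 2) = fun z : ℝ => π ^ 2 * (z ^ 2)⁻¹ := by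
    funext z; rw [div_eq_mul_inv]
  rw [h2]
  have := hs.ne'
  exact h.congr_deriv (by push_cast; field_simp)

lemma thidE1 {s : ℝ} (hs : 0 < s) :
    thB (s ^ 2) = Real.sqrt π * (-(1/2) * thA (π ^ 2 / s ^ 2) * (s⁻¹) ^ 3
      - π ^ 2 * thB (π ^ 2 / s ^ 2) * (s⁻¹) ^ 5) := by
  have hπ := Real.pi_pos
  have hv : 0 < π ^ 2 / s ^ 2 := by positivity
  have hin : HasDerivAt (fun z : ℝ => z ^ 2) (2 * s) s := by
    simpa using hasDerivAt_pow 2 s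
  have hL : HasDerivAt (fun z : ℝ => thA (z ^ 2)) (thB (s ^ 2) * (2 * s)) s :=
    HasDerivAt.comp_of_eq s (hasDerivAt_thA (show (0:ℝ) < s ^ 2 by positivity)) hin rfl
  have hcomp : HasDerivAt (fun z : ℝ => thA (π ^ 2 / z ^ 2))
      (thB (π ^ 2 / s ^ 2) * (-2 * π ^ 2 * (s⁻¹) ^ 3)) s :=
    HasDerivAt.comp_of_eq s (hasDerivAt_thA hv) (inner_deriv hs) rfl
  have hinv : HasDerivAt (fun z : ℝ => Real.sqrt π * z⁻¹) (Real.sqrt π * (-(s ^ 2)⁻¹)) s :=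
    (hasDerivAt_inv hs.ne').const_mul (Real.sqrt π)
  have hR := hinv.mul hcomp
  have heq : (fun z : ℝ => thA (z ^ 2)) =ᶠ[nhds s]
      (fun z : ℝ => Real.sqrt π * z⁻¹ * thA (π ^ 2 / z ^ 2)) := by
    filter_upwards [Ioi_mem_nhds hs] with z hz
    exact thA_transform hz
  have huniq := hL.unique (hR.congr_of_eventuallyEq heq)
  have hs' : s ≠ 0 := hs.ne'
  have hi : s * s⁻¹ = 1 := mul_inv_cancel₀ hs'
  refine mul_right_cancel₀ (show (2 : ℝ) * s ≠ 0 by positivity) ?_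
  rw [huniq]
  linear_combination (Real.sqrt π * thA (π ^ 2 / s ^ 2) * (s⁻¹) ^ 2
    + 2 * π ^ 2 * Real.sqrt π * thB (π ^ 2 / s ^ 2) * (s⁻¹) ^ 4) * hi

lemma thK_dual {s : ℝ} (hs : 0 < s) :
    thK (s ^ 2) = Real.sqrt π * π ^ 2 * (s⁻¹) ^ 5 * thK (π ^ 2 / s ^ 2) := by
  have hπ := Real.pi_pos
  have hs' : s ≠ 0 := hs.ne'
  have hv : 0 < π ^ 2 / s ^ 2 := by positivity
  -- second derivative identity
  have hin : HasDerivAt (fun z : ℝ => z ^ 2) (2 * s) s := by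
    simpa using hasDerivAt_pow 2 s
  have hL : HasDerivAt (fun z : ℝ => thB (z ^ 2)) (thC (s ^ 2) * (2 * s)) s :=
    HasDerivAt.comp_of_eq s (hasDerivAt_thB (show (0:ℝ) < s ^ 2 by positivity)) hin rfl
  have hA : HasDerivAt (fun z : ℝ => thA (π ^ 2 / z ^ 2))
      (thB (π ^ 2 / s ^ 2) * (-2 * π ^ 2 * (s⁻¹) ^ 3)) s :=
    HasDerivAt.comp_of_eq s (hasDerivAt_thA hv) (inner_deriv hs) rfl
  have hB : HasDerivAt (fun z : ℝ => thB (π ^ 2 / z ^ 2))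
      (thC (π ^ 2 / s ^ 2) * (-2 * π ^ 2 * (s⁻¹) ^ 3)) s :=
    HasDerivAt.comp_of_eq s (hasDerivAt_thB hv) (inner_deriv hs) rfl
  have hi3 : HasDerivAt (fun z : ℝ => (z⁻¹) ^ 3) ((3 : ℕ) * (s⁻¹) ^ 2 * (-(s ^ 2)⁻¹)) s :=
    (hasDerivAt_inv hs').pow 3
  have hi5 : HasDerivAt (fun z : ℝ => (z⁻¹) ^ 5) ((5 : ℕ) * (s⁻¹) ^ 4 * (-(s ^ 2)⁻¹)) s :=
    (hasDerivAt_inv hs').pow 5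
  have t1 := (hA.const_mul (-(1/2 : ℝ))).mul hi3
  have t2 := (hB.const_mul (π ^ 2)).mul hi5
  have hR := (t1.sub t2).const_mul (Real.sqrt π)
  have heq : (fun z : ℝ => thB (z ^ 2)) =ᶠ[nhds s]
      (fun z : ℝ => Real.sqrt π * (-(1/2) * thA (π ^ 2 / z ^ 2) * (z⁻¹) ^ 3
        - π ^ 2 * thB (π ^ 2 / z ^ 2) * (z⁻¹) ^ 5)) := by
    filter_upwards [Ioi_mem_nhds hs] with z hz
    exact thidE1 hz
  have huniq := hL.unique (hR.congr_of_eventuallyEq heq)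
  have he1 := thidE1 hs
  have hi : s * s⁻¹ = 1 := mul_inv_cancel₀ hs'
  rw [thK_eq (show (0:ℝ) < s ^ 2 by positivity), thK_eq hv]
  push_cast at huniq
  linear_combination s * huniq + 3 * he1 + (Real.sqrt π * ((3/2) * thA (π ^ 2 / s ^ 2) * (s⁻¹) ^ 3
    + 6 * π ^ 2 * thB (π ^ 2 / s ^ 2) * (s⁻¹) ^ 5
    + 2 * π ^ 4 * thC (π ^ 2 / s ^ 2) * (s⁻¹) ^ 7)) * hi

lemma thK_nonneg_of_ge {y : ℝ} (hy : 3 / 2 ≤ y) : 0 ≤ thK y := by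
  apply tsum_nonneg
  intro m
  rcases eq_or_ne m 0 with rfl | hm
  · simp
  · have h1 : (1 : ℝ) ≤ (m : ℝ) ^ 2 := by
      have h2 : (1 : ℝ) ≤ |(m : ℝ)| := by exact_mod_cast Int.one_le_abs hm
      nlinarith [abs_nonneg (m : ℝ), sq_abs (m : ℝ)]
    have h2 : 0 ≤ 2 * (m : ℝ) ^ 2 * y - 3 := by nlinarith
    exact mul_nonneg (mul_nonneg (sq_nonneg _) h2) (Real.exp_pos _).le

lemma thK_nonneg {y : ℝ} (hy : 0 < y) : 0 ≤ thK y := by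
  rcases le_or_gt (3 / 2) y with h | h
  · exact thK_nonneg_of_ge h
  · have hs : 0 < Real.sqrt y := Real.sqrt_pos.mpr hy
    have hs2 : Real.sqrt y ^ 2 = y := Real.sq_sqrt hy.le
    have hd := thK_dual hs
    rw [hs2] at hd
    rw [hd]
    have hπ := Real.pi_gt_three
    have hge : (3 / 2 : ℝ) ≤ π ^ 2 / y := by
      rw [le_div_iff₀ hy]; nlinarith
    have hK := thK_nonneg_of_ge hge
    have h5 : (0:ℝ) ≤ Real.sqrt π * π ^ 2 * ((Real.sqrt y)⁻¹) ^ 5 := by positivity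
    exact mul_nonneg h5 hK

/-- summability of the ℕ-indexed K-terms -/
lemma summable_natK (n : ℕ) {w : ℝ} (hw : 0 < w) :
    Summable (fun k : ℕ =>
      ((k : ℝ) + n) ^ 2 * (2 * ((k : ℝ) + n) ^ 2 * w - 3) * Real.exp (-((k : ℝ) + n) ^ 2 * w)) := by
  have h := ((summable_nat_gauss_add n 4 hw).mul_left (2 * w)).sub
    ((summable_nat_gauss_add n 2 hw).mul_left 3)
  exact h.congr fun k => by ring

/-- the ℤ-sum equals twice the ℕ-sum (at n = 0) -/
lemma thK_eq_nat {w : ℝ} (hw : 0 < w) :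
    thK w = 2 * ∑' k : ℕ,
      (k : ℝ) ^ 2 * (2 * (k : ℝ) ^ 2 * w - 3) * Real.exp (-(k : ℝ) ^ 2 * w) := by
  have hg : Summable (fun k : ℕ =>
      (k : ℝ) ^ 2 * (2 * (k : ℝ) ^ 2 * w - 3) * Real.exp (-(k : ℝ) ^ 2 * w)) := by
    refine (summable_natK 0 hw).congr fun k => by push_cast; ring_nf
  have hg1 : Summable (fun k : ℕ =>
      ((-(k + 1) : ℤ) : ℝ) ^ 2 * (2 * ((-(k + 1) : ℤ) : ℝ) ^ 2 * w - 3) *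
        Real.exp (-((-(k + 1) : ℤ) : ℝ) ^ 2 * w)) := by
    refine (summable_nat_gauss_add 1 4 hw).mul_left (2 * w) |>.sub
      ((summable_nat_gauss_add 1 2 hw).mul_left 3) |>.congr fun k => ?_
    push_cast; ring
  have hsplit := tsum_of_nat_of_neg_add_one
    (f := fun m : ℤ =>
      (m : ℝ) ^ 2 * (2 * (m : ℝ) ^ 2 * w - 3) * Real.exp (-(m : ℝ) ^ 2 * w))
    (by refine hg.congr fun k => by push_cast; ring_nf) hg1
  beta_reduce at hsplit
  have hneg : (∑' k : ℕ, ((-(k + 1) : ℤ) : ℝ) ^ 2 * (2 * ((-(k + 1) : ℤ) : ℝ) ^ 2 * w - 3) *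
      Real.exp (-((-(k + 1) : ℤ) : ℝ) ^ 2 * w)) =
      ∑' k : ℕ, ((k : ℝ) + 1) ^ 2 * (2 * ((k : ℝ) + 1) ^ 2 * w - 3) *
        Real.exp (-((k : ℝ) + 1) ^ 2 * w) :=
    tsum_congr fun k => by push_cast; ring_nf
  have hpos : (∑' k : ℕ, ((k : ℤ) : ℝ) ^ 2 * (2 * ((k : ℤ) : ℝ) ^ 2 * w - 3) *
      Real.exp (-((k : ℤ) : ℝ) ^ 2 * w)) =
      ∑' k : ℕ, (k : ℝ) ^ 2 * (2 * (k : ℝ) ^ 2 * w - 3) * Real.exp (-(k : ℝ) ^ 2 * w) :=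
    tsum_congr fun k => by push_cast; ring_nf
  have hzero : ((0:ℕ) : ℝ) ^ 2 * (2 * ((0:ℕ) : ℝ) ^ 2 * w - 3) *
      Real.exp (-((0:ℕ) : ℝ) ^ 2 * w) = 0 := by norm_num
  have hshift : (∑' k : ℕ, (k : ℝ) ^ 2 * (2 * (k : ℝ) ^ 2 * w - 3) * Real.exp (-(k : ℝ) ^ 2 * w))
      = ∑' k : ℕ, ((k : ℝ) + 1) ^ 2 * (2 * ((k : ℝ) + 1) ^ 2 * w - 3) *
        Real.exp (-((k : ℝ) + 1) ^ 2 * w) := by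
    rw [Summable.tsum_eq_zero_add hg, hzero, zero_add]
    exact tsum_congr fun k => by push_cast; ring_nf
  rw [hneg, hpos] at hsplit
  rw [thK, hsplit, ← hshift]
  ring

lemma natK_nonneg (n : ℕ) {w : ℝ} (hw : 0 < w) :
    0 ≤ ∑' k : ℕ,
      ((k : ℝ) + n) ^ 2 * (2 * ((k : ℝ) + n) ^ 2 * w - 3) * Real.exp (-((k : ℝ) + n) ^ 2 * w) := by
  by_cases hc : 3 ≤ 2 * (n : ℝ) ^ 2 * w
  · apply tsum_nonneg
    intro k
    have hk : (0 : ℝ) ≤ (k : ℝ) := Nat.cast_nonneg k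
    have hn : (0 : ℝ) ≤ (n : ℝ) := Nat.cast_nonneg n
    have h2 : (n : ℝ) ^ 2 ≤ ((k : ℝ) + n) ^ 2 := by nlinarith
    have h3 : 0 ≤ 2 * ((k : ℝ) + n) ^ 2 * w - 3 := by nlinarith
    exact mul_nonneg (mul_nonneg (sq_nonneg _) h3) (Real.exp_pos _).le
  · push_neg at hc
    have hg : Summable (fun k : ℕ =>
        (k : ℝ) ^ 2 * (2 * (k : ℝ) ^ 2 * w - 3) * Real.exp (-(k : ℝ) ^ 2 * w)) :=
      (summable_natK 0 hw).congr fun k => by push_cast; ring_nf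
    have hsplit := Summable.sum_add_tsum_nat_add (f := fun k : ℕ =>
        (k : ℝ) ^ 2 * (2 * (k : ℝ) ^ 2 * w - 3) * Real.exp (-(k : ℝ) ^ 2 * w)) n hg
    beta_reduce at hsplit
    have he : (∑' k : ℕ, (((k + n : ℕ) : ℝ)) ^ 2 * (2 * (((k + n : ℕ) : ℝ)) ^ 2 * w - 3) *
        Real.exp (-(((k + n : ℕ) : ℝ)) ^ 2 * w)) =
        ∑' k : ℕ, ((k : ℝ) + n) ^ 2 * (2 * ((k : ℝ) + n) ^ 2 * w - 3) *
          Real.exp (-((k : ℝ) + n) ^ 2 * w) :=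
      tsum_congr fun k => by push_cast; ring_nf
    rw [he] at hsplit
    have hrange : (∑ i ∈ Finset.range n, (i : ℝ) ^ 2 * (2 * (i : ℝ) ^ 2 * w - 3) *
        Real.exp (-(i : ℝ) ^ 2 * w)) ≤ 0 := by
      apply Finset.sum_nonpos
      intro i hi
      have hi' : (i : ℝ) ≤ (n : ℝ) := by
        exact_mod_cast (Finset.mem_range.mp hi).le
      have h7 : (i : ℝ) ^ 2 ≤ (n : ℝ) ^ 2 := by nlinarith [Nat.cast_nonneg (α := ℝ) i]
      have h4 : 2 * (i : ℝ) ^ 2 * w - 3 ≤ 0 := by nlinarith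
      have h5 : (i : ℝ) ^ 2 * (2 * (i : ℝ) ^ 2 * w - 3) ≤ 0 :=
        mul_nonpos_iff.mpr (Or.inl ⟨sq_nonneg _, h4⟩)
      exact mul_nonpos_iff.mpr (Or.inr ⟨h5, (Real.exp_pos _).le⟩)
    have hK : 0 ≤ ∑' k : ℕ, (k : ℝ) ^ 2 * (2 * (k : ℝ) ^ 2 * w - 3) *
        Real.exp (-(k : ℝ) ^ 2 * w) := by
      have h6 := thK_nonneg hw
      rw [thK_eq_nat hw] at h6
      linarith
    linarith

lemma natQ_nonneg (n : ℕ) {w : ℝ} (hw : 0 < w) :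
    0 ≤ ∑' k : ℕ,
      ((k : ℝ) + n) ^ 2 * (2 * ((k : ℝ) + n) ^ 2 * w - 1) * Real.exp (-((k : ℝ) + n) ^ 2 * w) := by
  have hq : (∑' k : ℕ,
      ((k : ℝ) + n) ^ 2 * (2 * ((k : ℝ) + n) ^ 2 * w - 1) * Real.exp (-((k : ℝ) + n) ^ 2 * w)) =
      (∑' k : ℕ, ((k : ℝ) + n) ^ 2 * (2 * ((k : ℝ) + n) ^ 2 * w - 3) *
        Real.exp (-((k : ℝ) + n) ^ 2 * w)) +
      ∑' k : ℕ, 2 * (((k : ℝ) + n) ^ 2 * Real.exp (-((k : ℝ) + n) ^ 2 * w)) := by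
    rw [← Summable.tsum_add (summable_natK n hw) ((summable_nat_gauss_add n 2 hw).mul_left 2)]
    exact tsum_congr fun k => by ring
  rw [hq]
  have h1 := natK_nonneg n hw
  have h2 : 0 ≤ ∑' k : ℕ, 2 * (((k : ℝ) + n) ^ 2 * Real.exp (-((k : ℝ) + n) ^ 2 * w)) :=
    tsum_nonneg fun k => by positivity
  linarith

noncomputable def qq (σ : ℝ) (n : ℕ) (k : ℕ) : ℝ := ((k : ℝ) + n) ^ 2 / (2 * σ ^ 2)

lemma qq_nonneg (σ : ℝ) (n k : ℕ) : 0 ≤ qq σ n k := by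
  unfold qq; positivity

lemma summable_T0 (σ : ℝ) (hσ : 0 < σ) (n : ℕ) {w : ℝ} (hw : 0 < w) :
    Summable (fun k : ℕ => Real.exp (-(qq σ n k * w))) := by
  refine (summable_nat_gauss_add n 0 (w := w / (2 * σ ^ 2)) (by positivity)).congr fun k => ?_
  rw [pow_zero, one_mul]
  congr 1
  unfold qq
  ring

lemma summable_T1 (σ : ℝ) (hσ : 0 < σ) (n : ℕ) {t : ℝ} (ht : 0 < t) :
    Summable (fun k : ℕ => -2 * qq σ n k * t * Real.exp (-(qq σ n k * t ^ 2))) := by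
  refine ((summable_nat_gauss_add n 2 (w := t ^ 2 / (2 * σ ^ 2)) (by positivity)).mul_left
    (-t / σ ^ 2)).congr fun k => ?_
  have hE : Real.exp (-((k : ℝ) + n) ^ 2 * (t ^ 2 / (2 * σ ^ 2)))
      = Real.exp (-(qq σ n k * t ^ 2)) := by
    congr 1; unfold qq; ring
  rw [← hE]
  unfold qq
  field_simp

lemma summable_T2 (σ : ℝ) (hσ : 0 < σ) (n : ℕ) {t : ℝ} (ht : 0 < t) :
    Summable (fun k : ℕ =>
      (4 * qq σ n k ^ 2 * t ^ 2 - 2 * qq σ n k) * Real.exp (-(qq σ n k * t ^ 2))) := by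
  have h := ((summable_nat_gauss_add n 4 (w := t ^ 2 / (2 * σ ^ 2)) (by positivity)).mul_left
    (t ^ 2 / σ ^ 4)).sub
    ((summable_nat_gauss_add n 2 (w := t ^ 2 / (2 * σ ^ 2)) (by positivity)).mul_left (1 / σ ^ 2))
  refine h.congr fun k => ?_
  have hE : Real.exp (-((k : ℝ) + n) ^ 2 * (t ^ 2 / (2 * σ ^ 2)))
      = Real.exp (-(qq σ n k * t ^ 2)) := by
    congr 1; unfold qq; ring
  rw [← hE]
  unfold qq
  field_simp
  ring

lemma term_hasDerivAt (σ : ℝ) (n k : ℕ) (z : ℝ) :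
    HasDerivAt (fun z : ℝ => Real.exp (-(qq σ n k * z ^ 2)))
      (-2 * qq σ n k * z * Real.exp (-(qq σ n k * z ^ 2))) z := by
  have hfun : (fun z : ℝ => -(qq σ n k * z ^ 2)) = (fun z : ℝ => -(qq σ n k) * z ^ 2) := by
    funext u; ring
  have hp : HasDerivAt (fun z : ℝ => -(qq σ n k * z ^ 2)) (-(qq σ n k) * (2 * z)) z := by
    rw [hfun]
    have h := (hasDerivAt_pow 2 z).const_mul (-(qq σ n k))
    exact h.congr_deriv (by norm_num)
  have h := hp.exp
  convert h using 1
  ring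

lemma term1_hasDerivAt (σ : ℝ) (n k : ℕ) (z : ℝ) :
    HasDerivAt (fun z : ℝ => -2 * qq σ n k * z * Real.exp (-(qq σ n k * z ^ 2)))
      ((4 * qq σ n k ^ 2 * z ^ 2 - 2 * qq σ n k) * Real.exp (-(qq σ n k * z ^ 2))) z := by
  have hlin : HasDerivAt (fun z : ℝ => -2 * qq σ n k * z) (-2 * qq σ n k) z := by
    have h := (hasDerivAt_id z).const_mul (-2 * qq σ n k)
    exact h.congr_deriv (by ring)
  have h := hlin.mul (term_hasDerivAt σ n k z)
  exact h.congr_deriv (by ring)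

lemma hasDerivAt_S (σ : ℝ) (hσ : 0 < σ) (n : ℕ) {t : ℝ} (ht : 0 < t) :
    HasDerivAt (fun z : ℝ => ∑' k : ℕ, Real.exp (-(qq σ n k * z ^ 2)))
      (∑' k : ℕ, -2 * qq σ n k * t * Real.exp (-(qq σ n k * t ^ 2))) t := by
  have hε : (0:ℝ) < t / 2 := by linarith
  have htm : t ∈ Ioi (t / 2) := by simpa using half_lt_self ht
  refine hasDerivAt_tsum_of_isPreconnected
    (u := fun k : ℕ => 4 / (t / 2) * Real.exp (-(qq σ n k * ((t / 2) ^ 2 / 2))))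
    ((summable_T0 σ hσ n (show (0:ℝ) < (t/2)^2/2 by positivity)).mul_left _)
    isOpen_Ioi isPreconnected_Ioi
    (fun k z _ => term_hasDerivAt σ n k z) (fun k z hz => ?_) htm
    (summable_T0 σ hσ n (show (0:ℝ) < t^2 by positivity)) htm
  have hq := qq_nonneg σ n k
  have hz' : t / 2 ≤ z := le_of_lt hz
  have hz0 : (0:ℝ) < z := lt_of_lt_of_le hε hz'
  have hb := T1_bound (q := qq σ n k) (z := z) (ε := t / 2) hq hε hz'
  rw [Real.norm_eq_abs, abs_of_nonpos (by nlinarith [mul_nonneg (mul_nonneg hq hz0.le) (Real.exp_pos (-(qq σ n k * z ^ 2))).le])]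
  calc -(-2 * qq σ n k * z * Real.exp (-(qq σ n k * z ^ 2)))
      = 2 * qq σ n k * z * Real.exp (-(qq σ n k * z ^ 2)) := by ring
    _ ≤ 4 / (t / 2) * Real.exp (-(qq σ n k * ((t / 2) ^ 2 / 2))) := hb

lemma hasDerivAt_S1 (σ : ℝ) (hσ : 0 < σ) (n : ℕ) {t : ℝ} (ht : 0 < t) :
    HasDerivAt (fun z : ℝ => ∑' k : ℕ, -2 * qq σ n k * z * Real.exp (-(qq σ n k * z ^ 2)))
      (∑' k : ℕ, (4 * qq σ n k ^ 2 * t ^ 2 - 2 * qq σ n k) *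
        Real.exp (-(qq σ n k * t ^ 2))) t := by
  have hε : (0:ℝ) < t / 2 := by linarith
  have htm : t ∈ Ioi (t / 2) := by simpa using half_lt_self ht
  refine hasDerivAt_tsum_of_isPreconnected
    (u := fun k : ℕ => 68 / (t / 2) ^ 2 * Real.exp (-(qq σ n k * ((t / 2) ^ 2 / 2))))
    ((summable_T0 σ hσ n (show (0:ℝ) < (t/2)^2/2 by positivity)).mul_left _)
    isOpen_Ioi isPreconnected_Ioi
    (fun k z _ => term1_hasDerivAt σ n k z) (fun k z hz => ?_) htm
    (summable_T1 σ hσ n ht) htm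
  have hq := qq_nonneg σ n k
  have hz' : t / 2 ≤ z := le_of_lt hz
  have hz0 : (0:ℝ) < z := lt_of_lt_of_le hε hz'
  have hb := T2_bound (q := qq σ n k) (z := z) (ε := t / 2) hq hε hz'
  have habs : |4 * qq σ n k ^ 2 * z ^ 2 - 2 * qq σ n k| ≤
      4 * qq σ n k ^ 2 * z ^ 2 + 2 * qq σ n k := by
    rw [abs_le]
    constructor <;> nlinarith
  rw [Real.norm_eq_abs, abs_mul, abs_of_nonneg (Real.exp_pos _).le]
  calc |4 * qq σ n k ^ 2 * z ^ 2 - 2 * qq σ n k| * Real.exp (-(qq σ n k * z ^ 2))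
      ≤ (4 * qq σ n k ^ 2 * z ^ 2 + 2 * qq σ n k) * Real.exp (-(qq σ n k * z ^ 2)) :=
        mul_le_mul_of_nonneg_right habs (Real.exp_pos _).le
    _ ≤ 68 / (t / 2) ^ 2 * Real.exp (-(qq σ n k * ((t / 2) ^ 2 / 2))) := hb

/-- For `σ > 0`, `a ≥ 0`, `b ≥ 0` and any natural number `n`, the function
`f_n(t) = (a + bt)·Σ_{k=0}^{∞} e^{-(k+n)²t²/(2σ²)}` is convex on `(0, ∞)`. -/
theorem offset_energy_penalty_convex (σ a b : ℝ) (n : ℕ) (hσ : 0 < σ) (ha : 0 ≤ a)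
    (hb : 0 ≤ b) :
    ConvexOn ℝ (Set.Ioi (0 : ℝ))
      (fun t : ℝ =>
        (a + b * t) * ∑' k : ℕ, Real.exp (-(((k : ℝ) + n) ^ 2 * t ^ 2) / (2 * σ ^ 2))) := by
  have hfun : (fun t : ℝ =>
      (a + b * t) * ∑' k : ℕ, Real.exp (-(((k : ℝ) + n) ^ 2 * t ^ 2) / (2 * σ ^ 2)))
      = fun t : ℝ => (a + b * t) * ∑' k : ℕ, Real.exp (-(qq σ n k * t ^ 2)) := by
    funext t
    congr 1
    exact tsum_congr fun k => by congr 1; unfold qq; ring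
  rw [hfun]
  -- the first and second derivatives
  have hlin : ∀ t : ℝ, HasDerivAt (fun z : ℝ => a + b * z) b t := by
    intro t
    have h := ((hasDerivAt_id t).const_mul b).const_add a
    simpa using h
  have hFd : ∀ t ∈ Ioi (0:ℝ), HasDerivAt
      (fun z : ℝ => (a + b * z) * ∑' k : ℕ, Real.exp (-(qq σ n k * z ^ 2)))
      (b * (∑' k : ℕ, Real.exp (-(qq σ n k * t ^ 2)))
        + (a + b * t) * ∑' k : ℕ, -2 * qq σ n k * t * Real.exp (-(qq σ n k * t ^ 2))) t := by
    intro t ht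
    exact (hlin t).mul (hasDerivAt_S σ hσ n ht)
  have hF1d : ∀ t ∈ Ioi (0:ℝ), HasDerivAt
      (fun z : ℝ => b * (∑' k : ℕ, Real.exp (-(qq σ n k * z ^ 2)))
        + (a + b * z) * ∑' k : ℕ, -2 * qq σ n k * z * Real.exp (-(qq σ n k * z ^ 2)))
      (2 * b * (∑' k : ℕ, -2 * qq σ n k * t * Real.exp (-(qq σ n k * t ^ 2)))
        + (a + b * t) * ∑' k : ℕ, (4 * qq σ n k ^ 2 * t ^ 2 - 2 * qq σ n k) *
            Real.exp (-(qq σ n k * t ^ 2))) t := by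
    intro t ht
    have h := ((hasDerivAt_S σ hσ n ht).const_mul b).add
      ((hlin t).mul (hasDerivAt_S1 σ hσ n ht))
    exact h.congr_deriv (by ring)
  have hev : ∀ t ∈ Ioi (0:ℝ),
      deriv (fun z : ℝ => (a + b * z) * ∑' k : ℕ, Real.exp (-(qq σ n k * z ^ 2)))
      =ᶠ[nhds t] fun z : ℝ => b * (∑' k : ℕ, Real.exp (-(qq σ n k * z ^ 2)))
        + (a + b * z) * ∑' k : ℕ, -2 * qq σ n k * z * Real.exp (-(qq σ n k * z ^ 2)) := by
    intro t ht
    filter_upwards [Ioi_mem_nhds ht] with z hz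
    exact (hFd z hz).deriv
  have hD2 : ∀ t ∈ Ioi (0:ℝ), HasDerivAt
      (deriv (fun z : ℝ => (a + b * z) * ∑' k : ℕ, Real.exp (-(qq σ n k * z ^ 2))))
      (2 * b * (∑' k : ℕ, -2 * qq σ n k * t * Real.exp (-(qq σ n k * t ^ 2)))
        + (a + b * t) * ∑' k : ℕ, (4 * qq σ n k ^ 2 * t ^ 2 - 2 * qq σ n k) *
            Real.exp (-(qq σ n k * t ^ 2))) t := by
    intro t ht
    exact (hF1d t ht).congr_of_eventuallyEq (hev t ht)
  apply convexOn_of_deriv2_nonneg (convex_Ioi (0:ℝ))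
  · intro t ht
    exact (hFd t ht).continuousAt.continuousWithinAt
  · rw [interior_Ioi]
    intro t ht
    exact (hFd t ht).differentiableAt.differentiableWithinAt
  · rw [interior_Ioi]
    intro t ht
    exact (hD2 t ht).differentiableAt.differentiableWithinAt
  · rw [interior_Ioi]
    intro t ht
    have h2 : deriv^[2] (fun z : ℝ => (a + b * z) * ∑' k : ℕ, Real.exp (-(qq σ n k * z ^ 2))) t
        = 2 * b * (∑' k : ℕ, -2 * qq σ n k * t * Real.exp (-(qq σ n k * t ^ 2)))
          + (a + b * t) * ∑' k : ℕ, (4 * qq σ n k ^ 2 * t ^ 2 - 2 * qq σ n k) *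
              Real.exp (-(qq σ n k * t ^ 2)) := by
      have := (hD2 t ht).deriv
      simpa [Function.iterate_succ, Function.iterate_zero] using this
    rw [h2]
    have ht' : (0:ℝ) < t := ht
    have hw : (0:ℝ) < t ^ 2 / (2 * σ ^ 2) := by positivity
    -- S2 ≥ 0
    have e2 : (∑' k : ℕ, (4 * qq σ n k ^ 2 * t ^ 2 - 2 * qq σ n k) *
        Real.exp (-(qq σ n k * t ^ 2)))
        = (1 / σ ^ 2) * ∑' k : ℕ, ((k : ℝ) + n) ^ 2 *
            (2 * ((k : ℝ) + n) ^ 2 * (t ^ 2 / (2 * σ ^ 2)) - 1) *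
            Real.exp (-((k : ℝ) + n) ^ 2 * (t ^ 2 / (2 * σ ^ 2))) := by
      rw [← tsum_mul_left]
      refine tsum_congr fun k => ?_
      have hE : Real.exp (-((k : ℝ) + n) ^ 2 * (t ^ 2 / (2 * σ ^ 2)))
          = Real.exp (-(qq σ n k * t ^ 2)) := by congr 1; unfold qq; ring
      rw [hE]
      unfold qq
      field_simp
      ring
    have hS2 : 0 ≤ ∑' k : ℕ, (4 * qq σ n k ^ 2 * t ^ 2 - 2 * qq σ n k) *
        Real.exp (-(qq σ n k * t ^ 2)) := by
      rw [e2]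
      exact mul_nonneg (by positivity) (natQ_nonneg n hw)
    -- 2*S1 + t*S2 ≥ 0
    have e3 : 2 * (∑' k : ℕ, -2 * qq σ n k * t * Real.exp (-(qq σ n k * t ^ 2)))
        + t * (∑' k : ℕ, (4 * qq σ n k ^ 2 * t ^ 2 - 2 * qq σ n k) *
            Real.exp (-(qq σ n k * t ^ 2)))
        = (t / σ ^ 2) * ∑' k : ℕ, ((k : ℝ) + n) ^ 2 *
            (2 * ((k : ℝ) + n) ^ 2 * (t ^ 2 / (2 * σ ^ 2)) - 3) *
            Real.exp (-((k : ℝ) + n) ^ 2 * (t ^ 2 / (2 * σ ^ 2))) := by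
      rw [← tsum_mul_left, ← tsum_mul_left, ← tsum_mul_left,
        ← Summable.tsum_add ((summable_T1 σ hσ n ht').mul_left 2) ((summable_T2 σ hσ n ht').mul_left t)]
      refine tsum_congr fun k => ?_
      have hE : Real.exp (-((k : ℝ) + n) ^ 2 * (t ^ 2 / (2 * σ ^ 2)))
          = Real.exp (-(qq σ n k * t ^ 2)) := by congr 1; unfold qq; ring
      rw [hE]
      unfold qq
      field_simp
      ring
    have hS12 : 0 ≤ 2 * (∑' k : ℕ, -2 * qq σ n k * t * Real.exp (-(qq σ n k * t ^ 2)))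
        + t * (∑' k : ℕ, (4 * qq σ n k ^ 2 * t ^ 2 - 2 * qq σ n k) *
            Real.exp (-(qq σ n k * t ^ 2))) := by
      rw [e3]
      exact mul_nonneg (by positivity) (natK_nonneg n hw)
    nlinarith [mul_nonneg ha hS2, mul_nonneg hb hS12]
end

section
/- Let λ > 0, α > 0, β > 0, and define for T > 0 and δ ≥ T the energy penalty ℰ(T, δ) = [e^{-λT}(β − λ(βδ + α)) + λ(βδ + α + e^{-λδ}(βT + α)) − β] / (λ(1 − e^{-λT})). Then for all T > 0 and all δ ≥ T, ℰ(T, δ) ≥ inf_{t > 0} ℰ(t, t); that is, the infimum of ℰ over {(T, δ) : T > 0, δ ≥ T} equals the infimum of ℰ(t, t) over t > 0, so under an exponentially distributed time to event an optimal offset satisfies δ* = T*. -/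
/-!
By memorylessness of the exponential distribution, an offset policy is a mixture of two
no-offset policies: `ℰ(T, δ) = (1 - e^{-λδ}) ℰ(δ, δ) + e^{-λδ} ℰ(T, T)`. A convex combination
of values of `t ↦ ℰ(t, t)` is at least their infimum, which is finite because
`ℰ(t, t) = (βt + α) / (1 - e^{-λt}) - β/λ ≥ -β/λ`.
-/

open Real Set

theorem ciInf_le_convex_combination {ι : Type*} {f : ι → ℝ} (hf : BddBelow (range f))
    {θ : ℝ} (hθ₀ : 0 ≤ θ) (hθ₁ : θ ≤ 1) (i j : ι) :
    ⨅ k, f k ≤ θ * f i + (1 - θ) * f j :=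
  calc ⨅ k, f k = θ * (⨅ k, f k) + (1 - θ) * (⨅ k, f k) := by ring
    _ ≤ θ * f i + (1 - θ) * f j := by
      gcongr
      · exact ciInf_le hf i
      · exact ciInf_le hf j

/-- The penalty `ℰ(T, δ)`, with the rate `λ` written `r`. -/
noncomputable def offsetPenalty (r α β T δ : ℝ) : ℝ :=
  (exp (-(r * T)) * (β - r * (β * δ + α)) + r * (β * δ + α + exp (-(r * δ)) * (β * T + α)) - β)
    / (r * (1 - exp (-(r * T))))

section

variable {r α β : ℝ}

theorem one_sub_exp_neg_mul_ne_zero {t : ℝ} (hr : r ≠ 0) (ht : t ≠ 0) :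
    1 - exp (-(r * t)) ≠ 0 := by
  rw [sub_ne_zero, ne_comm, Ne, exp_eq_one_iff, neg_eq_zero]
  exact mul_ne_zero hr ht

theorem offsetPenalty_self {t : ℝ} (hr : r ≠ 0) (ht : t ≠ 0) :
    offsetPenalty r α β t t = (β * t + α) / (1 - exp (-(r * t))) - β / r := by
  have := one_sub_exp_neg_mul_ne_zero hr ht
  unfold offsetPenalty
  field_simp
  ring

theorem offsetPenalty_eq_convex_combination {T δ : ℝ} (hr : r ≠ 0) (hT : T ≠ 0) (hδ : δ ≠ 0) :
    offsetPenalty r α β T δ =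
      (1 - exp (-(r * δ))) * offsetPenalty r α β δ δ
        + exp (-(r * δ)) * offsetPenalty r α β T T := by
  have := one_sub_exp_neg_mul_ne_zero hr hT
  have := one_sub_exp_neg_mul_ne_zero hr hδ
  unfold offsetPenalty
  field_simp
  ring

theorem neg_div_le_offsetPenalty_self {t : ℝ} (hr : 0 < r) (hα : 0 ≤ α) (hβ : 0 ≤ β)
    (ht : 0 < t) : -(β / r) ≤ offsetPenalty r α β t t := by
  have hexp : 0 < 1 - exp (-(r * t)) := by
    rw [sub_pos, exp_lt_one_iff, neg_lt_zero]
    positivity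
  rw [offsetPenalty_self hr.ne' ht.ne']
  have : 0 ≤ (β * t + α) / (1 - exp (-(r * t))) := by positivity
  linarith

theorem bddBelow_offsetPenalty_self (hr : 0 < r) (hα : 0 ≤ α) (hβ : 0 ≤ β) :
    BddBelow (range fun t : Ioi (0 : ℝ) => offsetPenalty r α β t t) := by
  refine ⟨-(β / r), ?_⟩
  rintro _ ⟨t, rfl⟩
  exact neg_div_le_offsetPenalty_self hr hα hβ t.2

end

/-- For an exponentially distributed time to event with rate `r > 0`, the offset energy
penalty `ℰ(T, δ)` for `T > 0`, `δ ≥ T` is never smaller than the infimum of the no-offset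
penalties `ℰ(t, t)` over `t > 0`: the offset cannot help, i.e. `δ* = T*` is optimal. -/
theorem offset_useless_exponential (r α β : ℝ) (hr : 0 < r) (hα : 0 < α) (hβ : 0 < β)
    (E : ℝ → ℝ → ℝ)
    (hE : ∀ T δ : ℝ, E T δ =
      (Real.exp (-(r * T)) * (β - r * (β * δ + α))
          + r * (β * δ + α + Real.exp (-(r * δ)) * (β * T + α)) - β)
        / (r * (1 - Real.exp (-(r * T))))) :
    ∀ T : ℝ, 0 < T → ∀ δ : ℝ, T ≤ δ →
      (⨅ t : Set.Ioi (0 : ℝ), E t t) ≤ E T δ := by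
  obtain rfl : E = offsetPenalty r α β := funext₂ hE
  intro T hT δ hTδ
  have hδ : 0 < δ := hT.trans_le hTδ
  have hweight : 0 ≤ 1 - exp (-(r * δ)) := by
    rw [sub_nonneg, exp_le_one_iff, neg_nonpos]
    positivity
  rw [offsetPenalty_eq_convex_combination hr.ne' hT.ne' hδ.ne']
  simpa only [sub_sub_cancel] using
    ciInf_le_convex_combination (bddBelow_offsetPenalty_self hr hα.le hβ.le) hweight
      (by linarith [exp_pos (-(r * δ))]) ⟨δ, hδ⟩ ⟨T, hT⟩
end
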